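/- Recursive second-moment bound (key step of the Stage II lemma). Under Assumption 2 and the recursion v_{t,i} = β₂·v_{t−1,i} + (1−β₂)·g_{t,i}², for every t ≥ 1 and every coordinate i ∈ {1,…,d}: E[√(β₂·v_{t−1,i})] ≤ √(D₀ + ‖v₀‖) + Σ_{j=1}^{t−1} √(β₂^j·(1−β₂)·D₁) · E[|∂ᵢf(x_{t−j})|]. -/

import Mathlib

open MeasureTheory Finset

/-!
Conditional Jensen for the concave square root gives, for `W` measurable with respect to the past
`m` and `E[X | m] ≤ D₀ + D₁ h²`,
`E √(W + c X) ≤ E √(W + c E[X | m]) ≤ E √(W + c D₀) + √(c D₁) E |h|`,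
the last step by subadditivity of `√`. Unrolling `v_s = β v_{s-1} + (1 - β) g_s²` one step at a
time, each step peels off one gradient term, and the deterministic remainders add up to
`β^s v₀ + (1 - β^s) D₀ ≤ D₀ + ‖v₀‖`.
-/

theorem Real.sqrt_add_le_sqrt_add_sqrt (x y : ℝ) : √(x + y) ≤ √x + √y := by
  rcases lt_or_ge y 0 with hy | hy
  · linarith [Real.sqrt_le_sqrt (by linarith : x + y ≤ x), Real.sqrt_nonneg y]
  rcases lt_or_ge x 0 with hx | hx
  · linarith [Real.sqrt_le_sqrt (by linarith : x + y ≤ y), Real.sqrt_nonneg x]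
  rw [Real.sqrt_le_left (by positivity)]
  nlinarith [Real.sq_sqrt hx, Real.sq_sqrt hy, mul_nonneg (Real.sqrt_nonneg x) (Real.sqrt_nonneg y)]

theorem mul_add_one_sub_mul_le_add {β p x y : ℝ} (hβ : β ∈ Set.Icc 0 1) (hp : p ∈ Set.Icc 0 1)
    (hx : 0 ≤ x) (hy : 0 ≤ y) : β * (p * x + (1 - p) * y) ≤ y + x := by
  nlinarith [mul_nonneg (sub_nonneg.2 hβ.2) (mul_nonneg hp.1 hx),
    mul_nonneg (sub_nonneg.2 hβ.2) (mul_nonneg (sub_nonneg.2 hp.2) hy),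
    mul_nonneg (sub_nonneg.2 hp.2) hx, mul_nonneg hp.1 hy]

namespace MeasureTheory

variable {Ω : Type*} {m m₀ : MeasurableSpace Ω} {μ : Measure Ω}

theorem Integrable.sqrt [IsFiniteMeasure μ] {f : Ω → ℝ} (hf : Integrable f μ) :
    Integrable (fun ω => √(f ω)) μ := by
  refine Integrable.mono' (g := fun ω => 1 + |f ω|) ((integrable_const 1).add hf.abs)
    (Real.continuous_sqrt.comp_aestronglyMeasurable hf.1) (ae_of_all _ fun ω => ?_)
  rw [Real.norm_of_nonneg (Real.sqrt_nonneg _), Real.sqrt_le_left (by positivity)]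
  nlinarith [abs_nonneg (f ω), le_abs_self (f ω)]

theorem integral_sqrt_le_integral_sqrt_condExp [IsFiniteMeasure μ] (hm : m ≤ m₀) {Y : Ω → ℝ}
    (hY_nonneg : 0 ≤ᵐ[μ] Y) (hY : Integrable Y μ) :
    ∫ ω, √(Y ω) ∂μ ≤ ∫ ω, √(μ[Y|m] ω) ∂μ :=
  calc ∫ ω, √(Y ω) ∂μ = ∫ ω, μ[fun ω => √(Y ω)|m] ω ∂μ := (integral_condExp hm).symm
    _ ≤ ∫ ω, √(μ[Y|m] ω) ∂μ :=
      integral_mono_ae integrable_condExp integrable_condExp.sqrt <|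
        Real.strictConcaveOn_sqrt.concaveOn.condExp_map_le hm
          Real.continuous_sqrt.continuousOn.upperSemicontinuousOn hY_nonneg isClosed_Ici hY hY.sqrt

theorem integral_sqrt_add_mul_le_of_condExp_le [IsFiniteMeasure μ] (hm : m ≤ m₀)
    {W X h : Ω → ℝ} {c D₀ D₁ : ℝ} (hc : 0 ≤ c)
    (hW : StronglyMeasurable[m] W) (hW_int : Integrable W μ) (hX_int : Integrable X μ)
    (h_nonneg : ∀ᵐ ω ∂μ, 0 ≤ W ω + c * X ω) (hh_int : Integrable h μ)
    (hX : μ[X|m] ≤ᵐ[μ] fun ω => D₀ + D₁ * h ω ^ 2) :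
    ∫ ω, √(W ω + c * X ω) ∂μ ≤ ∫ ω, √(W ω + c * D₀) ∂μ + √(c * D₁) * ∫ ω, |h ω| ∂μ := by
  have hWD_int : Integrable (fun ω => √(W ω + c * D₀)) μ :=
    (hW_int.add (integrable_const (c * D₀))).sqrt
  have hh_abs_int : Integrable (fun ω => √(c * D₁) * |h ω|) μ := hh_int.abs.const_mul _
  have hWX_int : Integrable (fun ω => W ω + c * X ω) μ := hW_int.add (hX_int.const_mul c)
  have hcondExp : μ[fun ω => W ω + c * X ω|m] =ᵐ[μ] fun ω => W ω + c * μ[X|m] ω := by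
    change μ[W + c • X|m] =ᵐ[μ] _
    filter_upwards [condExp_add hW_int (hX_int.smul c) m, condExp_smul c X m] with ω hadd hsmul
    rw [hadd, Pi.add_apply, hsmul, condExp_of_stronglyMeasurable hm hW hW_int]
    rfl
  have hbound : ∀ᵐ ω ∂μ, √(μ[fun ω => W ω + c * X ω|m] ω)
      ≤ √(W ω + c * D₀) + √(c * D₁) * |h ω| := by
    filter_upwards [hcondExp, hX] with ω hω hXω
    calc √(μ[fun ω => W ω + c * X ω|m] ω) ≤ √((W ω + c * D₀) + c * D₁ * h ω ^ 2) := by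
          rw [hω]; exact Real.sqrt_le_sqrt (by nlinarith)
      _ ≤ √(W ω + c * D₀) + √(c * D₁) * |h ω| := by
          rw [← Real.sqrt_sq_eq_abs, ← Real.sqrt_mul' _ (sq_nonneg _)]
          exact Real.sqrt_add_le_sqrt_add_sqrt _ _
  calc ∫ ω, √(W ω + c * X ω) ∂μ ≤ ∫ ω, √(μ[fun ω => W ω + c * X ω|m] ω) ∂μ :=
        integral_sqrt_le_integral_sqrt_condExp hm h_nonneg hWX_int
    _ ≤ ∫ ω, (√(W ω + c * D₀) + √(c * D₁) * |h ω|) ∂μ :=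
        integral_mono_ae integrable_condExp.sqrt (hWD_int.add hh_abs_int) hbound
    _ = ∫ ω, √(W ω + c * D₀) ∂μ + √(c * D₁) * ∫ ω, |h ω| ∂μ := by
        rw [integral_add hWD_int hh_abs_int, integral_const_mul]

def pastFiltration {E : Type*} [MeasurableSpace E] (g : ℕ → Ω → E)
    (hg : ∀ t, Measurable (g t)) : Filtration ℕ m₀ where
  seq t := ⨆ s ∈ Ico 1 t, MeasurableSpace.comap (g s) inferInstance
  mono' _ _ hst := biSup_mono fun _ hs => Ico_subset_Ico_right hst hs
  le' _ := iSup₂_le fun s _ => (hg s).comap_le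

theorem measurable_pastFiltration {E : Type*} [MeasurableSpace E] {g : ℕ → Ω → E}
    (hg : ∀ t, Measurable (g t)) {s t : ℕ} (hs : s ∈ Ico 1 t) :
    Measurable[pastFiltration g hg t] (g s) :=
  Measurable.of_comap_le (le_iSup₂_of_le s hs le_rfl)

section ExponentialMovingAverage

variable {V X : ℕ → Ω → ℝ} {β v₀ : ℝ}

theorem ema_nonneg (hV0 : V 0 = fun _ => v₀)
    (hV : ∀ s ω, V (s + 1) ω = β * V s ω + (1 - β) * X (s + 1) ω) (hβ : β ∈ Set.Icc 0 1)
    (hv₀ : 0 ≤ v₀) (hX : ∀ s ω, 0 ≤ X (s + 1) ω) (s : ℕ) (ω : Ω) : 0 ≤ V s ω := by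
  induction s with
  | zero => rwa [hV0]
  | succ s ih =>
    rw [hV]
    exact add_nonneg (mul_nonneg hβ.1 ih) (mul_nonneg (sub_nonneg.2 hβ.2) (hX s ω))

theorem ema_integrable (hV0 : V 0 = fun _ => v₀)
    (hV : ∀ s ω, V (s + 1) ω = β * V s ω + (1 - β) * X (s + 1) ω) [IsFiniteMeasure μ]
    (hX : ∀ s, Integrable (X (s + 1)) μ) (s : ℕ) : Integrable (V s) μ := by
  induction s with
  | zero => rw [hV0]; exact integrable_const v₀
  | succ s ih =>
    rw [funext (hV s)]
    exact (ih.const_mul β).add ((hX s).const_mul _)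

theorem ema_stronglyMeasurable (𝔽 : Filtration ℕ m₀) (hV0 : V 0 = fun _ => v₀)
    (hV : ∀ s ω, V (s + 1) ω = β * V s ω + (1 - β) * X (s + 1) ω)
    (hX : ∀ s, StronglyMeasurable[𝔽 (s + 2)] (X (s + 1))) (s : ℕ) :
    StronglyMeasurable[𝔽 (s + 1)] (V s) := by
  induction s with
  | zero => rw [hV0]; exact stronglyMeasurable_const
  | succ s ih =>
    rw [funext (hV s)]
    exact ((ih.mono (𝔽.mono (by omega))).const_mul β).add ((hX s).const_mul _)

/-- The free scale `c` and offset `a` make the bound inductive: the step from `s + 1` to `s` is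
the bound at `s` for `c * β` and `a + c * (1 - β) * D₀`. -/
theorem integral_sqrt_ema_le [IsProbabilityMeasure μ] (𝔽 : Filtration ℕ m₀) {h : ℕ → Ω → ℝ}
    {D₀ D₁ : ℝ} (hV0 : V 0 = fun _ => v₀)
    (hV : ∀ s ω, V (s + 1) ω = β * V s ω + (1 - β) * X (s + 1) ω) (hβ : β ∈ Set.Icc 0 1)
    (hv₀ : 0 ≤ v₀) (hD₀ : 0 ≤ D₀) (hX_nonneg : ∀ s ω, 0 ≤ X (s + 1) ω)
    (hX_int : ∀ s, Integrable (X (s + 1)) μ)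
    (hX_meas : ∀ s, StronglyMeasurable[𝔽 (s + 2)] (X (s + 1)))
    (hh_int : ∀ s, Integrable (h (s + 1)) μ)
    (hX_condExp : ∀ s, μ[X (s + 1)|𝔽 (s + 1)] ≤ᵐ[μ] fun ω => D₀ + D₁ * h (s + 1) ω ^ 2)
    (s : ℕ) {c a : ℝ} (hc : 0 ≤ c) (ha : 0 ≤ a) :
    ∫ ω, √(c * V s ω + a) ∂μ ≤ √(c * (β ^ s * v₀ + (1 - β ^ s) * D₀) + a)
      + ∑ k ∈ range s, √(c * β ^ k * (1 - β) * D₁) * ∫ ω, |h (s - k) ω| ∂μ := by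
  induction s generalizing c a with
  | zero => simp [hV0]
  | succ s ih =>
    have h1β : 0 ≤ 1 - β := sub_nonneg.2 hβ.2
    have hstep := integral_sqrt_add_mul_le_of_condExp_le (𝔽.le (s + 1))
      (W := fun ω => c * β * V s ω + a) (mul_nonneg hc h1β)
      (((ema_stronglyMeasurable 𝔽 hV0 hV hX_meas s).const_mul _).add stronglyMeasurable_const)
      (((ema_integrable hV0 hV hX_int s).const_mul _).add (integrable_const a)) (hX_int s)
      (ae_of_all _ fun ω => add_nonneg
        (add_nonneg (mul_nonneg (mul_nonneg hc hβ.1) (ema_nonneg hV0 hV hβ hv₀ hX_nonneg s ω)) ha)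
        (mul_nonneg (mul_nonneg hc h1β) (hX_nonneg s ω)))
      (hh_int s) (hX_condExp s)
    have ih' := ih (c := c * β) (a := a + c * (1 - β) * D₀) (mul_nonneg hc hβ.1)
      (add_nonneg ha (mul_nonneg (mul_nonneg hc h1β) hD₀))
    calc ∫ ω, √(c * V (s + 1) ω + a) ∂μ
        = ∫ ω, √(c * β * V s ω + a + c * (1 - β) * X (s + 1) ω) ∂μ := by
          congr 1 with ω
          rw [hV]
          ring_nf
      _ ≤ ∫ ω, √(c * β * V s ω + (a + c * (1 - β) * D₀)) ∂μ
            + √(c * (1 - β) * D₁) * ∫ ω, |h (s + 1) ω| ∂μ := by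
          simpa only [add_assoc] using hstep
      _ ≤ √(c * β * (β ^ s * v₀ + (1 - β ^ s) * D₀) + (a + c * (1 - β) * D₀))
            + ∑ k ∈ range s, √(c * β * β ^ k * (1 - β) * D₁) * ∫ ω, |h (s - k) ω| ∂μ
            + √(c * (1 - β) * D₁) * ∫ ω, |h (s + 1) ω| ∂μ := by
          grw [ih']
      _ = _ := by
          rw [sum_range_succ']
          simp only [Nat.add_sub_add_right, Nat.sub_zero, pow_succ, pow_zero]
          ring_nf

end ExponentialMovingAverage

end MeasureTheory

theorem recursive_second_moment_bound_general
    -- dimension and objective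
    {d : ℕ}
    (f : EuclideanSpace ℝ (Fin d) → ℝ)
    -- probability space and stochastic gradients
    {Ω : Type} [MeasurableSpace Ω] (μ : Measure Ω) [IsProbabilityMeasure μ]
    (g : ℕ → Ω → EuclideanSpace ℝ (Fin d))
    (hgmeas : ∀ t, Measurable (g t))
    (hgL2 : ∀ t, MemLp (g t) 2 μ)
    -- filtration ℱ_t = σ(g₁, …, g_{t−1})
    (ℱ : ℕ → MeasurableSpace Ω)
    (hℱ : ∀ t, ℱ t = ⨆ s ∈ Finset.Ico 1 t, MeasurableSpace.comap (g s) inferInstance)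
    (x : ℕ → Ω → EuclideanSpace ℝ (Fin d))
    -- second-moment recursion
    (β₂ : ℝ) (hβ₂ : β₂ ∈ Set.Ioo (0 : ℝ) 1)
    (v : ℕ → Ω → EuclideanSpace ℝ (Fin d)) (v₀ : EuclideanSpace ℝ (Fin d))
    (hv₀ : ∀ i, 0 < v₀ i) (hv0 : v 0 = fun _ => v₀)
    (hvrec : ∀ t, 1 ≤ t → ∀ ω, ∀ i : Fin d,
      v t ω i = β₂ * v (t - 1) ω i + (1 - β₂) * (g t ω i) ^ 2)
    -- Assumption 2: coordinate-wise affine noise variance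
    (D₀ D₁ : ℝ) (hD₀ : 0 < D₀)
    (hmean : ∀ t, 1 ≤ t → ∀ i : Fin d,
      μ[fun ω => g t ω i|ℱ t] =ᵐ[μ] fun ω => gradient f (x t ω) i)
    (hvar : ∀ t, 1 ≤ t → ∀ i : Fin d, ∀ᵐ ω ∂μ,
      (μ[fun ω => (g t ω i) ^ 2|ℱ t]) ω ≤ D₀ + D₁ * (gradient f (x t ω) i) ^ 2)
    (t : ℕ) (i : Fin d) :
    ∫ ω, Real.sqrt (β₂ * v (t - 1) ω i) ∂μ
      ≤ Real.sqrt (D₀ + ‖v₀‖)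
        + ∑ j ∈ Finset.Icc 1 (t - 1),
            Real.sqrt (β₂ ^ j * (1 - β₂) * D₁)
              * ∫ ω, |gradient f (x (t - j) ω) i| ∂μ := by
  obtain ⟨hβ₂0, hβ₂1⟩ := hβ₂
  obtain rfl : ℱ = pastFiltration g hgmeas := funext hℱ
  have hproj : Measurable fun y : EuclideanSpace ℝ (Fin d) => y i :=
    (EuclideanSpace.proj i).continuous.measurable
  have hX_int : ∀ s, Integrable (fun ω => g (s + 1) ω i ^ 2) μ := fun s =>
    ((hgL2 (s + 1)).of_le ((hproj.comp (hgmeas _)).aestronglyMeasurable)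
      (ae_of_all _ fun ω => PiLp.norm_apply_le _ i)).integrable_sq
  have hX_meas : ∀ s, StronglyMeasurable[pastFiltration g hgmeas (s + 2)]
      (fun ω => g (s + 1) ω i ^ 2) := fun s =>
    ((hproj.comp (measurable_pastFiltration hgmeas (by simp))).pow_const 2).stronglyMeasurable
  have hh_int : ∀ s, Integrable (fun ω => gradient f (x (s + 1) ω) i) μ := fun s =>
    integrable_condExp.congr (hmean (s + 1) (by omega) i)
  have key := integral_sqrt_ema_le (μ := μ) (pastFiltration g hgmeas) (V := fun s ω => v s ω i)
    (X := fun s ω => g s ω i ^ 2) (h := fun s ω => gradient f (x s ω) i) (v₀ := v₀ i) (D₁ := D₁)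
    (by rw [hv0]) (fun s ω => by simpa using hvrec (s + 1) (by omega) ω i)
    ⟨hβ₂0.le, hβ₂1.le⟩ (hv₀ i).le hD₀.le (fun _ _ => sq_nonneg _) hX_int hX_meas hh_int
    (fun s => hvar (s + 1) (by omega) i) (t - 1) (c := β₂) (a := 0) hβ₂0.le le_rfl
  simp only [add_zero] at key
  refine key.trans (add_le_add (Real.sqrt_le_sqrt ?_) (le_of_eq ?_))
  · have hv₀_le : v₀ i ≤ ‖v₀‖ := (Real.le_norm_self _).trans (PiLp.norm_apply_le v₀ i)
    grw [mul_add_one_sub_mul_le_add ⟨hβ₂0.le, hβ₂1.le⟩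
      ⟨pow_nonneg hβ₂0.le _, pow_le_one₀ hβ₂0.le hβ₂1.le⟩ (hv₀ i).le hD₀.le, hv₀_le]
  · rw [← Ico_succ_right_eq_Icc, sum_Ico_eq_sum_range, Order.succ_eq_add_one,
      Nat.add_sub_cancel]
    refine sum_congr rfl fun k _ => ?_
    rw [Nat.sub_sub, add_comm 1 k, pow_succ']

/-- Recursive second-moment bound (key step of the Stage II lemma).  Under the affine
noise variance assumption and the recursion `v_{t,i} = β₂·v_{t−1,i} + (1−β₂)·g_{t,i}²`,
for every `t ≥ 1` and every coordinate `i`: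
`E[√(β₂·v_{t−1,i})] ≤ √(D₀ + ‖v₀‖) + Σ_{j=1}^{t−1} √(β₂^j·(1−β₂)·D₁)·E[|∂ᵢf(x_{t−j})|]`. -/
theorem recursive_second_moment_bound
    -- dimension and objective
    {d : ℕ} (hd : 1 ≤ d)
    (f : EuclideanSpace ℝ (Fin d) → ℝ) (hf : Differentiable ℝ f)
    -- probability space and stochastic gradients
    {Ω : Type} [MeasurableSpace Ω] (μ : Measure Ω) [IsProbabilityMeasure μ]
    (g : ℕ → Ω → EuclideanSpace ℝ (Fin d))
    (hgmeas : ∀ t, Measurable (g t))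
    (hgL2 : ∀ t, MemLp (g t) 2 μ)
    -- filtration ℱ_t = σ(g₁, …, g_{t−1})
    (ℱ : ℕ → MeasurableSpace Ω)
    (hℱ : ∀ t, ℱ t = ⨆ s ∈ Finset.Ico 1 t, MeasurableSpace.comap (g s) inferInstance)
    -- ℱ_t-measurable random points x_t, with deterministic x₀ = x₁
    (x : ℕ → Ω → EuclideanSpace ℝ (Fin d)) (x₁ : EuclideanSpace ℝ (Fin d))
    (hxmeas : ∀ t, Measurable[ℱ t] (x t))
    (hx1 : x 1 = fun _ => x₁) (hx0 : x 0 = x 1)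
    -- second-moment recursion
    (β₂ : ℝ) (hβ₂ : β₂ ∈ Set.Ioo (0 : ℝ) 1)
    (v : ℕ → Ω → EuclideanSpace ℝ (Fin d)) (v₀ : EuclideanSpace ℝ (Fin d))
    (hv₀ : ∀ i, 0 < v₀ i) (hv0 : v 0 = fun _ => v₀)
    (hvrec : ∀ t, 1 ≤ t → ∀ ω, ∀ i : Fin d,
      v t ω i = β₂ * v (t - 1) ω i + (1 - β₂) * (g t ω i) ^ 2)
    -- Assumption 2: coordinate-wise affine noise variance
    (D₀ D₁ : ℝ) (hD₀ : 0 < D₀) (hD₁ : 0 < D₁)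
    (hmean : ∀ t, 1 ≤ t → ∀ i : Fin d,
      μ[fun ω => g t ω i|ℱ t] =ᵐ[μ] fun ω => gradient f (x t ω) i)
    (hvar : ∀ t, 1 ≤ t → ∀ i : Fin d, ∀ᵐ ω ∂μ,
      (μ[fun ω => (g t ω i) ^ 2|ℱ t]) ω ≤ D₀ + D₁ * (gradient f (x t ω) i) ^ 2)
    (t : ℕ) (ht : 1 ≤ t) (i : Fin d) :
    ∫ ω, Real.sqrt (β₂ * v (t - 1) ω i) ∂μ
      ≤ Real.sqrt (D₀ + ‖v₀‖)
        + ∑ j ∈ Finset.Icc 1 (t - 1),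
            Real.sqrt (β₂ ^ j * (1 - β₂) * D₁)
              * ∫ ω, |gradient f (x (t - j) ω) i| ∂μ :=
  recursive_second_moment_bound_general f μ g hgmeas hgL2 ℱ hℱ x β₂ hβ₂ v v₀ hv₀ hv0 hvrec D₀ D₁ hD₀
    hmean hvar t i
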